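/- At an interior minimum with antisymmetric data: suppose w : ℝⁿ → ℝ is continuous, in L_0, antisymmetric across T_λ (w(x^λ) = -w(x)), w ≥ 0 on Σ_λ \ H for a measurable H ⊂ Σ_λ, w > 0 on a subset A ⊂ Σ_λ of positive measure, and x⁰ ∈ H satisfies w(x⁰) = 0 = min_{Σ_λ} w. Then (-Δ)^L w(x⁰) < 0, and in particular L_Δ w(x⁰) < 0. -/

import Mathlib

open MeasureTheory Metric Filter Set

noncomputable section

/-- ℝⁿ with n = N+1 coordinates, Euclidean norm. -/
abbrev E (n : ℕ) := EuclideanSpace ℝ (Fin (n+1))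

/-- Reflection of a point across the hyperplane {x_n = λ}. -/
def reflect (n : ℕ) (lam : ℝ) (y : E n) : E n :=
  WithLp.toLp 2 (Function.update y (Fin.last n) (2*lam - y (Fin.last n)))

/-- The first n coordinates x'. -/
def proj (n : ℕ) (x : E n) : EuclideanSpace ℝ (Fin n) := WithLp.toLp 2 (fun i => x i.castSucc)

/-- The normalization constant C_n = π^{-d/2} Γ(d/2) with d = n+1 the dimension. -/
def Cconst (n : ℕ) : ℝ := Real.pi ^ (-(((n:ℝ)+1)/2)) * Real.Gamma (((n:ℝ)+1)/2)

/-- Integrand of the logarithmic Laplacian. -/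
def kern (n : ℕ) (u : E n → ℝ) (x y : E n) : ℝ :=
  ((Metric.ball x 1).indicator (fun _ => u x) y - u y) / ‖x - y‖ ^ (n+1)

/-- `logLapAt n u x L` : the principal value C_n P.V.∫ (u(x)1_{B₁(x)}(y)-u(y))/|x-y|ᵈ dy
exists and equals `L`, i.e. (-Δ)^L u (x) = L. -/
def logLapAt (n : ℕ) (u : E n → ℝ) (x : E n) (L : ℝ) : Prop :=
  Tendsto (fun ε : ℝ => Cconst n * ∫ y in {y : E n | ε < ‖x - y‖}, kern n u x y)
    (nhdsWithin 0 (Set.Ioi 0)) (nhds L)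

/-- The class L₀ of admissible functions. -/
def memL0 (n : ℕ) (u : E n → ℝ) : Prop :=
  Integrable (fun x : E n => |u x| / (1 + ‖x‖ ^ (n+1)))

/-- Locally C^{1,1} on a set: near each point, differentiable with locally Lipschitz derivative. -/
def C11loc (n : ℕ) (u : E n → ℝ) (s : Set (E n)) : Prop :=
  ∀ x ∈ s, ∃ t ∈ nhdsWithin x s, DifferentiableOn ℝ u t ∧
    ∃ K, LipschitzOnWith K (fderiv ℝ u) t

/-- Digamma function ψ = Γ'/Γ. -/
def digamma (s : ℝ) : ℝ := deriv Real.Gamma s / Real.Gamma s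

/-- Euler–Mascheroni constant γ = -Γ'(1). -/
def eulerGamma : ℝ := -(deriv Real.Gamma 1)

/-- ρ_d = 2 ln 2 + ψ(d/2) - γ for dimension d = n+1. -/
def rho (n : ℕ) : ℝ := 2 * Real.log 2 + digamma (((n:ℝ)+1)/2) - eulerGamma

/-- The coercive Lipschitz epigraph Ω = {x : x_n > φ(x')}. -/
def Omega (n : ℕ) (phi : EuclideanSpace ℝ (Fin n) → ℝ) : Set (E n) :=
  {x | phi (proj n x) < x (Fin.last n)}

/-- The half space Σ_λ = {x_n < λ}. -/
def SigmaLam (n : ℕ) (lam : ℝ) : Set (E n) := {x | x (Fin.last n) < lam}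


namespace S12

/-- The linear isometry negating the last coordinate. -/
def rT (n : ℕ) : E n ≃ₗᵢ[ℝ] E n :=
  LinearIsometryEquiv.piLpCongrRight 2
    (fun i => if i = Fin.last n then LinearIsometryEquiv.neg ℝ else LinearIsometryEquiv.refl ℝ ℝ)

def vv (n : ℕ) (lam : ℝ) : E n := WithLp.toLp 2 (fun i => if i = Fin.last n then 2*lam else 0)

lemma reflect_eq (n : ℕ) (lam : ℝ) : reflect n lam = fun y => vv n lam + rT n y := by
  funext y; ext i
  show (Function.update y (Fin.last n) (2*lam - y (Fin.last n))) i
    = vv n lam i + ((if i = Fin.last n then LinearIsometryEquiv.neg ℝ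
        else LinearIsometryEquiv.refl ℝ ℝ) (y i))
  rw [Function.update_apply]
  by_cases h : i = Fin.last n
  · subst h; simp [vv, sub_eq_add_neg]
  · simp [vv, h]

lemma continuous_reflect (n : ℕ) (lam : ℝ) : Continuous (reflect n lam) := by
  rw [reflect_eq]; exact continuous_const.add (rT n).continuous

lemma measurePreserving_reflect (n : ℕ) (lam : ℝ) :
    MeasurePreserving (reflect n lam) (volume : Measure (E n)) volume := by
  rw [reflect_eq]
  exact (measurePreserving_add_left volume (vv n lam)).comp (rT n).measurePreserving

lemma reflect_involutive (n : ℕ) (lam : ℝ) : Function.Involutive (reflect n lam) := by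
  intro y
  simp only [reflect, WithLp.ofLp_toLp, Function.update_idem, Function.update_self]
  ring_nf
  rw [Function.update_eq_self]

/-- Reflection as a measurable equivalence. -/
def reflectME (n : ℕ) (lam : ℝ) : E n ≃ᵐ E n where
  toEquiv := (reflect_involutive n lam).toPerm _
  measurable_toFun := (continuous_reflect n lam).measurable
  measurable_invFun := (continuous_reflect n lam).measurable

lemma reflect_last (n : ℕ) (lam : ℝ) (z : E n) :
    reflect n lam z (Fin.last n) = 2*lam - z (Fin.last n) := by
  simp [reflect]

lemma sub_apply' (n : ℕ) (x y : E n) (i : Fin (n+1)) : (x - y) i = x i - y i := rfl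

lemma norm_sq_eq (n : ℕ) (v : E n) : ‖v‖^2 = ∑ i, (v i)^2 := by
  rw [EuclideanSpace.norm_eq, Real.sq_sqrt (by positivity)]
  simp [sq_abs]

lemma abs_apply_le (n : ℕ) (v : E n) (i : Fin (n+1)) : |v i| ≤ ‖v‖ := by
  have h1 : (v i)^2 ≤ ‖v‖^2 := by
    rw [norm_sq_eq]
    exact Finset.single_le_sum (f := fun i => (v i)^2) (fun j _ => sq_nonneg _) (Finset.mem_univ i)
  have := abs_nonneg (v i); have := norm_nonneg v
  nlinarith [sq_abs (v i)]

lemma norm_sub_reflect_sq (n : ℕ) (lam : ℝ) (x z : E n) :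
    ‖x - reflect n lam z‖^2 = ‖x - z‖^2
      + 4*(lam - x (Fin.last n))*(lam - z (Fin.last n)) := by
  rw [norm_sq_eq, norm_sq_eq,
    ← Finset.sum_erase_add _ _ (Finset.mem_univ (Fin.last n)),
    ← Finset.sum_erase_add _ _ (Finset.mem_univ (Fin.last n))]
  have h1 : ∀ i ∈ Finset.univ.erase (Fin.last n),
      ((x - reflect n lam z) i)^2 = ((x - z) i)^2 := by
    intro i hi
    have h : i ≠ Fin.last n := Finset.ne_of_mem_erase hi
    simp [sub_apply', reflect, Function.update_apply, h]
  rw [Finset.sum_congr rfl h1, sub_apply', sub_apply', reflect_last]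
  ring

lemma norm_le_reflect {n : ℕ} {lam : ℝ} {x z : E n}
    (hx : x (Fin.last n) ≤ lam) (hz : z (Fin.last n) ≤ lam) :
    ‖x - z‖ ≤ ‖x - reflect n lam z‖ := by
  have h := norm_sub_reflect_sq n lam x z
  have h1 := norm_nonneg (x - z); have h2 := norm_nonneg (x - reflect n lam z)
  nlinarith

lemma norm_lt_reflect {n : ℕ} {lam : ℝ} {x z : E n}
    (hx : x (Fin.last n) < lam) (hz : z (Fin.last n) < lam) :
    ‖x - z‖ < ‖x - reflect n lam z‖ := by
  have h := norm_sub_reflect_sq n lam x z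
  have h1 := norm_nonneg (x - z); have h2 := norm_nonneg (x - reflect n lam z)
  nlinarith

lemma reflect_lower {n : ℕ} {lam : ℝ} {x z : E n}
    (hx : x (Fin.last n) ≤ lam) (hz : z (Fin.last n) ≤ lam) :
    lam - x (Fin.last n) ≤ ‖x - reflect n lam z‖ := by
  have h := abs_apply_le n (x - reflect n lam z) (Fin.last n)
  rw [sub_apply', reflect_last] at h
  have h2 : -(x (Fin.last n) - (2*lam - z (Fin.last n)))
      ≤ |x (Fin.last n) - (2*lam - z (Fin.last n))| := neg_le_abs _
  linarith

/-- Integrability of `w / F ^ (n+1)` on regions away from `x0`. -/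
lemma integrableOn_div {n : ℕ} {w : E n → ℝ} (hw : Continuous w) (hL0 : memL0 n w)
    (x0 : E n) {ε : ℝ} (hε : 0 < ε) {F : E n → ℝ} (hF : Measurable F)
    {s : Set (E n)} (hsm : MeasurableSet s)
    (hs : ∀ z ∈ s, ε ≤ ‖x0 - z‖ ∧ ‖x0 - z‖ ≤ F z) :
    IntegrableOn (fun z => w z / F z ^ (n+1)) s := by
  set K := (1/ε)^(n+1) + ((‖x0‖+ε)/ε)^(n+1) with hKdef
  have hx0n := norm_nonneg x0
  have hb : ∀ z ∈ s, ‖w z / F z ^ (n+1)‖ ≤ K * (|w z| / (1+‖z‖^(n+1))) := by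
    intro z hz
    obtain ⟨h1, h2⟩ := hs z hz
    have ht : (0:ℝ) < F z := lt_of_lt_of_le hε (le_trans h1 h2)
    have hzn : ‖z‖ ≤ ((‖x0‖+ε)/ε) * F z := by
      have hz1 : ‖z‖ ≤ ‖x0‖ + ‖x0 - z‖ := by
        have := norm_sub_le x0 (x0 - z)
        rwa [sub_sub_cancel] at this
      have : ε * (‖x0‖ + F z) ≤ (‖x0‖ + ε) * F z := by nlinarith [le_trans h1 h2]
      rw [div_mul_eq_mul_div, le_div_iff₀ hε]
      nlinarith [le_trans h1 h2]
    have key : 1 + ‖z‖^(n+1) ≤ K * F z^(n+1) := by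
      have k1 : (1:ℝ) ≤ (1/ε)^(n+1) * F z^(n+1) := by
        rw [← mul_pow]
        have hq : (1:ℝ) ≤ (1/ε) * F z := by
          rw [one_div, inv_mul_eq_div, le_div_iff₀ hε]
          linarith [le_trans h1 h2]
        calc (1:ℝ) = 1^(n+1) := by norm_num
        _ ≤ ((1/ε) * F z)^(n+1) := pow_le_pow_left₀ zero_le_one hq _
      have k2 : ‖z‖^(n+1) ≤ ((‖x0‖+ε)/ε)^(n+1) * F z^(n+1) := by
        rw [← mul_pow]
        exact pow_le_pow_left₀ (norm_nonneg z) hzn _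
      rw [hKdef, add_mul]; linarith
    rw [Real.norm_eq_abs, abs_div, abs_pow, abs_of_pos ht, ← mul_div_assoc,
      div_le_div_iff₀ (by positivity) (by positivity)]
    nlinarith [abs_nonneg (w z), pow_pos ht (n+1)]
  have hint : Integrable (fun z : E n => K * (|w z| / (1+‖z‖^(n+1)))) := hL0.const_mul K
  refine Integrable.mono' hint.integrableOn ?_ ?_
  · exact (hw.measurable.div ((hF.pow_const _))).aestronglyMeasurable
  · exact (ae_restrict_iff' hsm).2 (ae_of_all _ hb)

lemma exists_annulus {n : ℕ} (x0 : E n) {A : Set (E n)} (hApos : 0 < volume A) :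
    ∃ k : ℕ, 0 < volume (A ∩ (closedBall x0 (k+1) \ ball x0 (1/(k+1)))) := by
  by_contra hcon
  push_neg at hcon
  have hz : ∀ k : ℕ, volume (A ∩ (closedBall x0 (k+1) \ ball x0 (1/(k+1)))) = 0 :=
    fun k => le_antisymm (hcon k) zero_le
  have hsub : A ⊆ {x0} ∪ ⋃ k : ℕ, (A ∩ (closedBall x0 (k+1) \ ball x0 (1/(k+1)))) := by
    intro y hy
    rcases eq_or_ne y x0 with h | h
    · exact Or.inl h
    · right
      have ht : 0 < dist y x0 := dist_pos.2 h
      set t := dist y x0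
      refine mem_iUnion.2 ⟨⌈max t (1/t)⌉₊, hy, ?_, ?_⟩
      · rw [mem_closedBall]
        have : t ≤ max t (1/t) := le_max_left _ _
        have h2 := Nat.le_ceil (max t (1/t))
        push_cast
        linarith
      · rw [mem_ball, not_lt]
        have h1 : 1/t ≤ (⌈max t (1/t)⌉₊ : ℝ) + 1 := by
          have := le_trans (le_max_right t (1/t)) (Nat.le_ceil (max t (1/t)))
          linarith
        rw [div_le_iff₀ (by positivity)]
        rw [div_le_iff₀ ht] at h1
        linarith
  have hle : volume A ≤ 0 := by
    calc volume A ≤ volume ({x0} ∪ ⋃ k : ℕ, (A ∩ (closedBall x0 (k+1) \ ball x0 (1/(k+1))))) :=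
        measure_mono hsub
    _ ≤ volume ({x0} : Set (E n)) + volume (⋃ k : ℕ, (A ∩ (closedBall x0 (k+1) \ ball x0 (1/(k+1))))) :=
        measure_union_le _ _
    _ ≤ 0 := by
        rw [measure_singleton, measure_iUnion_null hz]; simp
  exact absurd hApos (by simpa using hle)

end S12

/-- at an interior minimum x⁰ (with w(x⁰) = 0 = min over Σ_λ) of a
continuous antisymmetric function, nonnegative on Σ_λ \ H and positive on a
subset of Σ_λ of positive measure, one has (-Δ)^L w(x⁰) < 0 and L_Δ w(x⁰) < 0. -/
theorem stmt12 (n : ℕ) (lam : ℝ) (w : E n → ℝ) (H A : Set (E n)) (x0 : E n)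
    (hw : Continuous w) (hL0 : memL0 n w)
    (hanti : ∀ x, w (reflect n lam x) = -w x)
    (hH : H ⊆ SigmaLam n lam) (hA : A ⊆ SigmaLam n lam)
    (hAmeas : MeasurableSet A) (hApos : 0 < volume A)
    (hwA : ∀ y ∈ A, 0 < w y)
    (hgeout : ∀ y ∈ SigmaLam n lam \ H, 0 ≤ w y)
    (hx0 : x0 ∈ H) (hw0 : w x0 = 0)
    (hmin : ∀ y ∈ SigmaLam n lam, w x0 ≤ w y) :
    ∀ L, logLapAt n w x0 L → L < 0 ∧ L + rho n * w x0 < 0 := by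
  intro L hT
  have hCpos : 0 < Cconst n := by
    have := Real.Gamma_pos_of_pos (show 0 < ((n:ℝ)+1)/2 by positivity)
    rw [Cconst]; positivity
  have hSglt : ∀ z : E n, z ∈ SigmaLam n lam → z (Fin.last n) < lam := fun z hz => hz
  have hx0S : x0 ∈ SigmaLam n lam := hH hx0
  have hx0lt : x0 (Fin.last n) < lam := hSglt x0 hx0S
  have hδ : 0 < lam - x0 (Fin.last n) := sub_pos.2 hx0lt
  have hwnn : ∀ y : E n, y (Fin.last n) ≤ lam → 0 ≤ w y := by
    intro y hy
    rcases lt_or_eq_of_le hy with h | h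
    · have h2 := hmin y h
      rw [hw0] at h2; exact h2
    · have hre : reflect n lam y = y := by
        ext i
        rw [reflect, WithLp.ofLp_toLp, Function.update_apply]
        split_ifs with hi
        · subst hi; rw [h]; ring
        · rfl
      have h3 := hanti y
      rw [hre] at h3
      linarith
  have hle : ∀ z : E n, z (Fin.last n) ≤ lam → ‖x0 - z‖ ≤ ‖x0 - reflect n lam z‖ :=
    fun z hz => S12.norm_le_reflect (le_of_lt hx0lt) hz
  have hSgmeas : MeasurableSet (SigmaLam n lam) :=
    (isOpen_lt (PiLp.continuous_apply 2 _ (Fin.last n)) continuous_const).measurableSet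
  have hPmeas : MeasurableSet {y : E n | y (Fin.last n) ≤ lam} :=
    (isClosed_le (PiLp.continuous_apply 2 _ (Fin.last n)) continuous_const).measurableSet
  set g1 : E n → ℝ := fun z => w z / ‖x0 - z‖^(n+1) with hg1def
  set g2 : E n → ℝ := fun z => w z / ‖x0 - reflect n lam z‖^(n+1) with hg2def
  have hFcont : Continuous fun z : E n => ‖x0 - reflect n lam z‖ :=
    (continuous_const.sub (S12.continuous_reflect n lam)).norm
  have hg2m : Measurable g2 := hw.measurable.div ((hFcont.pow (n+1)).measurable)
  have hkern : kern n w x0 = fun y => -(g1 y) := by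
    funext y
    rw [hg1def]
    simp [kern, hw0, neg_div]
  have hSmeas : ∀ ε : ℝ, MeasurableSet {y : E n | ε < ‖x0 - y‖} :=
    fun ε => (isOpen_lt continuous_const (continuous_const.sub continuous_id).norm).measurableSet
  have hig1 : ∀ ε : ℝ, 0 < ε → IntegrableOn g1 {y : E n | ε < ‖x0 - y‖} := by
    intro ε hε
    exact S12.integrableOn_div hw hL0 x0 hε
      ((continuous_const.sub continuous_id).norm.measurable) (hSmeas ε)
      (fun z hz => ⟨le_of_lt hz, le_refl _⟩)
  have hig2 : ∀ ε : ℝ, 0 < ε →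
      IntegrableOn g2 ({y : E n | ε < ‖x0 - y‖} ∩ SigmaLam n lam) := by
    intro ε hε
    exact S12.integrableOn_div hw hL0 x0 hε hFcont.measurable ((hSmeas ε).inter hSgmeas)
      (fun z hz => ⟨le_of_lt hz.1, hle z (le_of_lt (hSglt z hz.2))⟩)
  -- the annulus
  obtain ⟨k, hk⟩ := S12.exists_annulus x0 hApos
  set r : ℝ := 1/((k:ℝ)+1) with hrdef
  set R : ℝ := (k:ℝ)+1 with hRdef
  set A' := A ∩ (closedBall x0 R \ ball x0 r) with hA'def
  have hrpos : 0 < r := by rw [hrdef]; positivity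
  have hA'meas : MeasurableSet A' :=
    hAmeas.inter (measurableSet_closedBall.diff measurableSet_ball)
  have hA'pos : 0 < volume A' := hk
  have hA'A : A' ⊆ A := inter_subset_left
  have hA'Sg : A' ⊆ SigmaLam n lam := hA'A.trans hA
  have hA'r : ∀ y ∈ A', r ≤ ‖x0 - y‖ := by
    intro y hy
    have h1 := hy.2.2
    rw [mem_ball, not_lt] at h1
    rwa [dist_comm, dist_eq_norm] at h1
  set c := ∫ z in A', (g1 z - g2 z) with hcdef
  have hA'subS : ∀ ε : ℝ, ε < r → A' ⊆ {y : E n | ε < ‖x0 - y‖} ∩ SigmaLam n lam :=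
    fun ε hεr y hy => ⟨lt_of_lt_of_le hεr (hA'r y hy), hA'Sg hy⟩
  have hdiffint : ∀ ε : ℝ, 0 < ε →
      IntegrableOn (fun z => g1 z - g2 z) ({y : E n | ε < ‖x0 - y‖} ∩ SigmaLam n lam) :=
    fun ε hε => ((hig1 ε hε).mono_set inter_subset_left).sub (hig2 ε hε)
  have hnn12 : ∀ z : E n, z ∈ SigmaLam n lam → 0 < ‖x0 - z‖ → 0 ≤ g1 z - g2 z := by
    intro z hzSg hzpos
    have hwz : 0 ≤ w z := hwnn z (le_of_lt (hSglt z hzSg))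
    have h1 : ‖x0 - z‖ ≤ ‖x0 - reflect n lam z‖ := hle z (le_of_lt (hSglt z hzSg))
    have h2 : ‖x0 - z‖^(n+1) ≤ ‖x0 - reflect n lam z‖^(n+1) :=
      pow_le_pow_left₀ (norm_nonneg _) h1 _
    have hp : (0:ℝ) < ‖x0 - z‖^(n+1) := pow_pos hzpos _
    show 0 ≤ w z / ‖x0 - z‖^(n+1) - w z / ‖x0 - reflect n lam z‖^(n+1)
    rw [sub_nonneg, div_le_div_iff₀ (by linarith) hp]
    nlinarith
  have hcpos : 0 < c := by
    have hnnae : 0 ≤ᵐ[volume.restrict A'] (fun z => g1 z - g2 z) :=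
      (ae_restrict_iff' hA'meas).2 (ae_of_all _ fun z hz =>
        hnn12 z (hA'Sg hz) (lt_of_lt_of_le hrpos (hA'r z hz)))
    have hint : IntegrableOn (fun z => g1 z - g2 z) A' :=
      (hdiffint (r/2) (by positivity)).mono_set (hA'subS (r/2) (by linarith))
    rw [hcdef, setIntegral_pos_iff_support_of_nonneg_ae hnnae hint]
    refine lt_of_lt_of_le hA'pos (measure_mono ?_)
    intro z hz
    refine ⟨?_, hz⟩
    have hwz : 0 < w z := hwA z (hA'A hz)
    have hzSg : z ∈ SigmaLam n lam := hA'Sg hz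
    have hzpos : 0 < ‖x0 - z‖ := lt_of_lt_of_le hrpos (hA'r z hz)
    have hlt : ‖x0 - z‖ < ‖x0 - reflect n lam z‖ := S12.norm_lt_reflect hx0lt (hSglt z hzSg)
    have hq : ‖x0 - z‖^(n+1) < ‖x0 - reflect n lam z‖^(n+1) :=
      pow_lt_pow_left₀ hlt (norm_nonneg _) (by omega)
    have hgt : g2 z < g1 z := by
      show w z / ‖x0 - reflect n lam z‖^(n+1) < w z / ‖x0 - z‖^(n+1)
      exact div_lt_div_of_pos_left hwz (pow_pos hzpos _) hq
    simp only [Function.mem_support]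
    exact ne_of_gt (sub_pos.2 hgt)
  -- sup of |w| on the unit ball
  obtain ⟨m, hm, hmax⟩ := (isCompact_closedBall x0 1).exists_isMaxOn
    ⟨x0, mem_closedBall_self zero_le_one⟩ hw.abs.continuousOn
  set M0 := |w m| with hM0def
  have hM0 : ∀ y ∈ closedBall x0 1, |w y| ≤ M0 := fun y hy => hmax hy
  have hM0nn : 0 ≤ M0 := abs_nonneg _
  set CE := M0 / (lam - x0 (Fin.last n))^(n+1) with hCEdef
  have hCEnn : 0 ≤ CE := div_nonneg hM0nn (by positivity)
  set K0 := (volume (ball (0:E n) 1)).toReal with hK0def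
  have hK0nn : 0 ≤ K0 := ENNReal.toReal_nonneg
  set t0 := min 1 (min (r/2) (c/(2*(CE*K0+1)))) with ht0def
  have ht0pos : 0 < t0 := by
    rw [ht0def]
    have hden : (0:ℝ) < 2*(CE*K0+1) := by nlinarith only [mul_nonneg hCEnn hK0nn]
    exact lt_min one_pos (lt_min (half_pos hrpos) (div_pos hcpos hden))
  clear_value t0 c K0 CE M0 R r
  -- the main bound
  have hmain : ∀ ε : ℝ, ε ∈ Ioc (0:ℝ) t0 →
      Cconst n * ∫ y in {y : E n | ε < ‖x0 - y‖}, kern n w x0 y ≤ Cconst n * (-(c/2)) := by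
    rintro ε ⟨hε, hεt0⟩
    rw [ht0def] at hεt0
    have hε1 : ε ≤ 1 := le_trans hεt0 (min_le_left _ _)
    have hεr2 : ε ≤ r/2 := le_trans hεt0 (le_trans (min_le_right _ _) (min_le_left _ _))
    have hεr : ε < r := lt_of_le_of_lt hεr2 (by linarith)
    have hεc : ε ≤ c/(2*(CE*K0+1)) :=
      le_trans hεt0 (le_trans (min_le_right _ _) (min_le_right _ _))
    set Sε := {y : E n | ε < ‖x0 - y‖} with hSdef
    set S'ε := {z : E n | ε < ‖x0 - reflect n lam z‖} with hS'def
    set Sgs := SigmaLam n lam with hSgdef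
    set P := {y : E n | y (Fin.last n) ≤ lam} with hPdef2
    have hSεm : MeasurableSet Sε := hSmeas ε
    have hincl : Sε ∩ Sgs ⊆ S'ε := fun z hz =>
      lt_of_lt_of_le hz.1 (hle z (le_of_lt (hSglt z hz.2)))
    simp only [hkern]
    have hint1 : IntegrableOn (fun y => -(g1 y)) Sε := (hig1 ε hε).neg
    have hsplit : (∫ y in Sε ∩ P, -(g1 y)) + ∫ y in Sε \ P, -(g1 y) = ∫ y in Sε, -(g1 y) :=
      integral_inter_add_diff (s := Sε) (t := P) hPmeas hint1
    have hpre : reflect n lam ⁻¹' (Sε \ P) = S'ε ∩ Sgs := by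
      ext z
      simp only [mem_preimage, mem_diff, mem_inter_iff, hSdef, hS'def, mem_setOf_eq,
        hPdef2, hSgdef, SigmaLam, S12.reflect_last, not_le]
      constructor
      · rintro ⟨h1, h2⟩; exact ⟨h1, by linarith⟩
      · rintro ⟨h1, h2⟩; exact ⟨h1, by linarith⟩
    have hsubst : ∫ y in Sε \ P, -(g1 y) = ∫ z in S'ε ∩ Sgs, g2 z := by
      have h1 := (S12.measurePreserving_reflect n lam).setIntegral_preimage_emb
        (S12.reflectME n lam).measurableEmbedding (fun y => -(g1 y)) (Sε \ P)
      rw [hpre] at h1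
      rw [← h1]
      refine integral_congr_ae (ae_of_all _ fun z => ?_)
      show -(g1 (reflect n lam z)) = g2 z
      rw [hg1def, hg2def]
      simp only [hanti, neg_div]
      ring
    have hg1nnP : 0 ≤ᵐ[volume.restrict (Sε ∩ P)] g1 :=
      (ae_restrict_iff' (hSεm.inter hPmeas)).2 (ae_of_all _ fun z hz =>
        div_nonneg (hwnn z hz.2) (by positivity))
    have hstepA : ∫ y in Sε ∩ Sgs, g1 y ≤ ∫ y in Sε ∩ P, g1 y :=
      setIntegral_mono_set ((hig1 ε hε).mono_set inter_subset_left) hg1nnP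
        (HasSubset.Subset.eventuallyLE
          (inter_subset_inter_right _ (fun z hz => le_of_lt (hSglt z hz))))
    set W := (S'ε ∩ Sgs) \ Sε with hWdef
    have hWsub : W ⊆ closedBall x0 ε := by
      intro z hz
      rw [mem_closedBall, dist_comm, dist_eq_norm]
      exact not_lt.1 hz.2
    have hWfin : volume W < ⊤ := lt_of_le_of_lt (measure_mono hWsub) measure_closedBall_lt_top
    have hS'm : MeasurableSet S'ε := (isOpen_lt continuous_const hFcont).measurableSet
    have hWmeas : MeasurableSet W := (hS'm.inter hSgmeas).diff hSεm
    have hg2meas : AEStronglyMeasurable g2 (volume.restrict W) := hg2m.aestronglyMeasurable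
    have hg2bW : ∀ z ∈ W, ‖g2 z‖ ≤ CE := by
      intro z hz
      have hzSg : z ∈ Sgs := hz.1.2
      have hzb : z ∈ closedBall x0 1 := closedBall_subset_closedBall hε1 (hWsub hz)
      have hd : lam - x0 (Fin.last n) ≤ ‖x0 - reflect n lam z‖ :=
        S12.reflect_lower (le_of_lt hx0lt) (le_of_lt (hSglt z hzSg))
      have : ‖g2 z‖ = |w z| / ‖x0 - reflect n lam z‖^(n+1) := by
        rw [hg2def]
        rw [Real.norm_eq_abs, abs_div, abs_pow, abs_of_nonneg (norm_nonneg _)]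
      rw [this, hCEdef]
      exact div_le_div₀ hM0nn (hM0 z hzb) (by positivity) (pow_le_pow_left₀ (le_of_lt hδ) hd _)
    have hig2W : IntegrableOn g2 W := by
      refine Integrable.mono' (g := fun _ => CE) (integrableOn_const hWfin.ne)
        hg2meas ?_
      exact (ae_restrict_iff' hWmeas).2 (ae_of_all _ hg2bW)
    have hig2' : IntegrableOn g2 (S'ε ∩ Sgs) := by
      have huni : S'ε ∩ Sgs = (Sε ∩ Sgs) ∪ W := by
        apply Subset.antisymm
        · intro z hz
          by_cases h : z ∈ Sε
          · exact Or.inl ⟨h, hz.2⟩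
          · exact Or.inr ⟨hz, h⟩
        · rintro z (hz | hz)
          · exact ⟨hincl hz, hz.2⟩
          · exact hz.1
      rw [huni]
      exact (hig2 ε hε).union hig2W
    have hdecomp : ∫ z in S'ε ∩ Sgs, g2 z = (∫ z in Sε ∩ Sgs, g2 z) + ∫ z in W, g2 z := by
      have h := integral_inter_add_diff (s := S'ε ∩ Sgs) (t := Sε) hSεm hig2'
      have hseteq : (S'ε ∩ Sgs) ∩ Sε = Sε ∩ Sgs := by
        apply Subset.antisymm
        · rintro z ⟨⟨_, h2⟩, h3⟩; exact ⟨h3, h2⟩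
        · intro z hz; exact ⟨⟨hincl hz, hz.2⟩, hz.1⟩
      rw [hseteq] at h
      linarith only [h]
    have hWle : ∫ z in W, g2 z ≤ CE * (ε^(n+1) * K0) := by
      have h1 : ‖∫ z in W, g2 z‖ ≤ CE * (volume W).toReal :=
        norm_setIntegral_le_of_norm_le_const hWfin hg2bW
      have h2 : (volume W).toReal ≤ (volume (closedBall x0 ε)).toReal :=
        ENNReal.toReal_mono measure_closedBall_lt_top.ne (measure_mono hWsub)
      have h3 : (volume (closedBall x0 ε)).toReal = ε^(n+1) * K0 := by
        rw [Measure.addHaar_closedBall volume x0 (le_of_lt hε), finrank_euclideanSpace_fin,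
          ENNReal.toReal_mul, ENNReal.toReal_ofReal (by positivity), ← hK0def]
      have h4 : ∫ z in W, g2 z ≤ ‖∫ z in W, g2 z‖ := le_abs_self _
      have h5 : CE * (volume W).toReal ≤ CE * (ε^(n+1) * K0) := by
        rw [← h3]
        exact mul_le_mul_of_nonneg_left h2 hCEnn
      linarith only [h1, h4, h5]
    have hintg1Sg : IntegrableOn g1 (Sε ∩ Sgs) := (hig1 ε hε).mono_set inter_subset_left
    have hsum : (∫ z in Sε ∩ Sgs, g2 z) - ∫ z in Sε ∩ Sgs, g1 z
        = ∫ z in Sε ∩ Sgs, (g2 z - g1 z) := (integral_sub (hig2 ε hε) hintg1Sg).symm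
    have hcle : c ≤ ∫ z in Sε ∩ Sgs, (g1 z - g2 z) := by
      rw [hcdef]
      refine setIntegral_mono_set (hdiffint ε hε) ?_
        (HasSubset.Subset.eventuallyLE (hA'subS ε hεr))
      exact (ae_restrict_iff' (hSεm.inter hSgmeas)).2 (ae_of_all _ fun z hz =>
        hnn12 z hz.2 (lt_trans hε hz.1))
    have hflip : ∫ z in Sε ∩ Sgs, (g2 z - g1 z) = -∫ z in Sε ∩ Sgs, (g1 z - g2 z) := by
      rw [← integral_neg]
      exact integral_congr_ae (ae_of_all _ fun z => (neg_sub _ _).symm)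
    have herr : CE * (ε^(n+1) * K0) ≤ c/2 := by
      have hp : ε^(n+1) ≤ ε := by
        calc ε^(n+1) ≤ ε^1 := pow_le_pow_of_le_one (le_of_lt hε) hε1 (by omega)
        _ = ε := pow_one ε
      have h1 : CE * (ε^(n+1) * K0) ≤ CE*K0*ε := by
        have h0 := mul_le_mul_of_nonneg_left hp (mul_nonneg hCEnn hK0nn)
        linarith only [h0]
      have h2 : CE*K0*ε ≤ CE*K0*(c/(2*(CE*K0+1))) :=
        mul_le_mul_of_nonneg_left hεc (mul_nonneg hCEnn hK0nn)
      have h3 : CE*K0*(c/(2*(CE*K0+1))) ≤ c/2 := by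
        have hden : (0:ℝ) < 2*(CE*K0+1) := by nlinarith only [mul_nonneg hCEnn hK0nn]
        rw [mul_div_assoc', div_le_div_iff₀ hden two_pos]
        nlinarith only [mul_nonneg hCEnn hK0nn, hcpos]
      linarith only [h1, h2, h3]
    have e1 : ∫ y in Sε ∩ P, -(g1 y) = -∫ y in Sε ∩ P, g1 y := integral_neg _
    have e2 : ∫ y in Sε, -(g1 y) ≤ -(c/2) := by
      linarith only [hsplit, hsubst, hdecomp, e1, hstepA, hsum, hflip, hcle, hWle, herr]
    exact mul_le_mul_of_nonneg_left e2 (le_of_lt hCpos)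
  have hev : ∀ᶠ ε in nhdsWithin (0:ℝ) (Set.Ioi 0),
      Cconst n * ∫ y in {y : E n | ε < ‖x0 - y‖}, kern n w x0 y ≤ Cconst n * (-(c/2)) := by
    exact Filter.eventually_of_mem (Ioc_mem_nhdsGT ht0pos) hmain
  have hLle : L ≤ Cconst n * (-(c/2)) := le_of_tendsto hT hev
  have hneg : Cconst n * (-(c/2)) < 0 := mul_neg_of_pos_of_neg hCpos (by linarith)
  refine ⟨by linarith only [hLle, hneg], ?_⟩
  rw [hw0, mul_zero, add_zero]
  linarith only [hLle, hneg]
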